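/- Let X have positive Lebesgue measure, let λ_X denote Lebesgue measure restricted to X, let c : X×X → ℝ be continuous and τ > 0. Then the map (μ, ν) ↦ T_τ(μ,ν) + τ H(μ|λ_X) is jointly convex on P(X)×P(X) with values in (−∞,+∞]: for all pairs (μ₀,ν₀), (μ₁,ν₁) ∈ P(X)² and t ∈ [0,1], writing μ_t := (1−t)μ₀ + tμ₁ and ν_t := (1−t)ν₀ + tν₁, one has T_τ(μ_t, ν_t) + τ H(μ_t|λ_X) ≤ (1−t)[T_τ(μ₀,ν₀) + τ H(μ₀|λ_X)] + t[T_τ(μ₁,ν₁) + τ H(μ₁|λ_X)]. -/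

import Mathlib

open MeasureTheory Real Set

abbrev Pt (d : ℕ) := EuclideanSpace ℝ (Fin d)

-- Relative entropy `H(γ|ρ)`, with values in `(-∞, +∞]`.
open Classical in
noncomputable def relEnt {α : Type*} [MeasurableSpace α] (γ ρ : Measure α) : EReal :=
  if γ ≪ ρ ∧ Integrable (fun x => Real.log ((γ.rnDeriv ρ x).toReal)) γ
  then ((∫ x, Real.log ((γ.rnDeriv ρ x).toReal) ∂γ : ℝ) : EReal)
  else ⊤

-- Entropic optimal transport cost `T_τ(μ,ν) = inf_{γ ∈ Π(μ,ν)} ∫ c dγ + τ H(γ|μ⊗ν)`.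
noncomputable def EOT {α : Type*} [MeasurableSpace α] (c : α × α → ℝ) (τ : ℝ)
    (μ ν : Measure α) : EReal :=
  ⨅ γ : {γ : Measure (α × α) // γ.map Prod.fst = μ ∧ γ.map Prod.snd = ν},
    ((∫ q, c q ∂(γ : Measure (α × α)) : ℝ) : EReal)
      + (τ : EReal) * relEnt (γ : Measure (α × α)) (μ.prod ν)

/-!
For a coupling `γ` of `(μ, ν)`, the chain rule for relative entropy gives
`H(γ | λ ⊗ ν) = H(γ | μ ⊗ ν) + H(μ | λ)`, so `T_τ(μ, ν) + τ H(μ | λ)` is the infimum, over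
couplings `γ` of `(μ, ν)`, of `∫ c dγ + τ H(γ | λ ⊗ ν)`. This functional is jointly convex in
`(γ, ν)`: the cost term is linear, `λ ⊗ ν` is linear in `ν`, and relative entropy is jointly convex
(log-sum inequality). Since mixing couplings of `(μ₀, ν₀)` and `(μ₁, ν₁)` gives a coupling of
`(μₜ, νₜ)`, the infimum inherits the convexity.
-/

open scoped ENNReal
open InformationTheory

namespace EReal

lemma iInf_add_of_ne_bot {ι : Sort*} (f : ι → EReal) {C : EReal} (hf : ⨅ i, f i ≠ ⊥)
    (hC : C ≠ ⊥) : ⨅ i, (f i + C) = (⨅ i, f i) + C := by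
  refine le_antisymm ?_ (le_iInf fun i => by gcongr; exact iInf_le f i)
  induction C with
  | bot => exact absurd rfl hC
  | top => rw [add_top_of_ne_bot hf]; exact le_top
  | coe r =>
    rw [← sub_le_iff_le_add (.inl (coe_ne_bot r)) (.inl (coe_ne_top r))]
    exact le_iInf fun i => (sub_le_iff_le_add (.inl (coe_ne_bot r)) (.inl (coe_ne_top r))).2
      (iInf_le (fun i => f i + r) i)

lemma coe_mul_ne_bot {a : ℝ} (ha : 0 ≤ a) {x : EReal} (hx : x ≠ ⊥) : (a : EReal) * x ≠ ⊥ := by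
  simp [mul_ne_bot, ha, hx]

lemma le_mul_iInf_add_mul_iInf {ι κ : Sort*} {f : ι → EReal} {g : κ → EReal} {x : EReal}
    {a b : ℝ} (ha : 0 < a) (hb : 0 < b) (hf : ⨅ i, f i ≠ ⊥) (hg : ⨅ j, g j ≠ ⊥)
    (h : ∀ i j, x ≤ a * f i + b * g j) : x ≤ a * (⨅ i, f i) + b * ⨅ j, g j := by
  by_cases hf' : ⨅ i, f i = ⊤
  · rw [hf', coe_mul_top_of_pos ha, top_add_of_ne_bot (coe_mul_ne_bot hb.le hg)]
    exact le_top
  by_cases hg' : ⨅ j, g j = ⊤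
  · rw [hg', coe_mul_top_of_pos hb, add_top_of_ne_bot (coe_mul_ne_bot ha.le hf)]
    exact le_top
  lift ⨅ i, f i to ℝ using ⟨hf', hf⟩ with F hF
  lift ⨅ j, g j to ℝ using ⟨hg', hg⟩ with G hG
  rw [← le_of_forall_lt_iff_le]
  intro z hz
  have hz : a * F + b * G < z := by exact_mod_cast hz
  set δ := (z - (a * F + b * G)) / (a + b)
  have hδ : 0 < δ := _root_.div_pos (by linarith) (by linarith)
  obtain ⟨i, hi⟩ : ∃ i, f i < (F + δ : ℝ) :=
    iInf_lt_iff.1 (by rw [← hF]; exact_mod_cast lt_add_of_pos_right F hδ)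
  obtain ⟨j, hj⟩ : ∃ j, g j < (G + δ : ℝ) :=
    iInf_lt_iff.1 (by rw [← hG]; exact_mod_cast lt_add_of_pos_right G hδ)
  calc x ≤ a * f i + b * g j := h i j
    _ ≤ a * (F + δ : ℝ) + b * (G + δ : ℝ) := by gcongr
    _ = z := by
        norm_cast
        rw [show a * (F + δ) + b * (G + δ) = a * F + b * G + (a + b) * δ by ring,
          mul_div_cancel₀ _ (by linarith : a + b ≠ 0)]
        ring

end EReal

section RelativeEntropy

variable {α : Type*} [MeasurableSpace α]

lemma relEnt_of_ac_of_integrable {γ ρ : Measure α} (h : γ ≪ ρ) (h' : Integrable (llr γ ρ) γ) :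
    relEnt γ ρ = ((∫ x, llr γ ρ x ∂γ : ℝ) : EReal) := by
  rw [relEnt, if_pos ⟨h, h'⟩]; rfl

lemma relEnt_eq_top {γ ρ : Measure α} (h : ¬ (γ ≪ ρ ∧ Integrable (llr γ ρ) γ)) :
    relEnt γ ρ = ⊤ :=
  if_neg h

lemma relEnt_ne_bot (γ ρ : Measure α) : relEnt γ ρ ≠ ⊥ := by
  unfold relEnt; split_ifs <;> simp

lemma relEnt_eq_klDiv_add (γ ρ : Measure α) [IsFiniteMeasure γ] [IsFiniteMeasure ρ] :
    relEnt γ ρ = (klDiv γ ρ : EReal) + ((γ.real univ - ρ.real univ : ℝ) : EReal) := by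
  by_cases h : γ ≪ ρ ∧ Integrable (llr γ ρ) γ
  · rw [relEnt_of_ac_of_integrable h.1 h.2, klDiv_of_ac_of_integrable h.1 h.2,
      EReal.coe_ennreal_ofReal, max_eq_left (integral_llr_add_sub_measure_univ_nonneg h.1 h.2)]
    norm_cast; ring
  · rw [relEnt_eq_top h, klDiv_def, if_neg h, EReal.coe_ennreal_top, EReal.top_add_coe]

lemma relEnt_eq_klDiv (γ ρ : Measure α) [IsProbabilityMeasure γ] [IsProbabilityMeasure ρ] :
    relEnt γ ρ = klDiv γ ρ := by
  simp [relEnt_eq_klDiv_add]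

lemma relEnt_nonneg (γ ρ : Measure α) [IsProbabilityMeasure γ] [IsProbabilityMeasure ρ] :
    0 ≤ relEnt γ ρ := by
  rw [relEnt_eq_klDiv]; exact EReal.coe_ennreal_nonneg _

lemma klDiv_prod_eq_add {β : Type*} [MeasurableSpace β] [StandardBorelSpace β] [Nonempty β]
    (γ : Measure (α × β)) [IsFiniteMeasure γ] (lam : Measure α) [IsFiniteMeasure lam]
    (ν : Measure β) [IsProbabilityMeasure ν] :
    klDiv γ (lam.prod ν) = klDiv γ.fst lam + klDiv γ (γ.fst.prod ν) := by
  conv_lhs => rw [← γ.disintegrate γ.condKernel, ← Measure.compProd_const]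
  rw [klDiv_compProd_eq_add, Measure.compProd_const, γ.disintegrate γ.condKernel]

lemma relEnt_prod_eq_add {β : Type*} [MeasurableSpace β] [StandardBorelSpace β] [Nonempty β]
    {γ : Measure (α × β)} [IsProbabilityMeasure γ] {μ : Measure α} (hμ : γ.map Prod.fst = μ)
    (lam : Measure α) [IsFiniteMeasure lam] (ν : Measure β) [IsProbabilityMeasure ν] :
    relEnt γ (lam.prod ν) = relEnt γ (μ.prod ν) + relEnt μ lam := by
  rw [← Measure.fst] at hμ
  subst hμ
  rw [relEnt_eq_klDiv_add, relEnt_eq_klDiv_add, relEnt_eq_klDiv_add, klDiv_prod_eq_add]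
  have hmass : (lam.prod ν).real univ = lam.real univ := by
    rw [← univ_prod_univ, measureReal_prod_prod, probReal_univ (μ := ν), mul_one]
  simp only [hmass, probReal_univ, sub_self, EReal.coe_zero, add_zero, EReal.coe_ennreal_add]
  ac_rfl

end RelativeEntropy

section Mixture

variable {α : Type*} [MeasurableSpace α] {a b : ℝ}

lemma isProbabilityMeasure_mix {μ₀ μ₁ : Measure α} [IsProbabilityMeasure μ₀]
    [IsProbabilityMeasure μ₁] (ha : 0 ≤ a) (hb : 0 ≤ b) (hab : a + b = 1) :
    IsProbabilityMeasure (ENNReal.ofReal a • μ₀ + ENNReal.ofReal b • μ₁) := by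
  constructor
  simp [← ENNReal.ofReal_add ha hb, hab]

lemma integral_mix {f : α → ℝ} {μ₀ μ₁ : Measure α} (h₀ : Integrable f μ₀)
    (h₁ : Integrable f μ₁) (ha : 0 ≤ a) (hb : 0 ≤ b) :
    ∫ x, f x ∂(ENNReal.ofReal a • μ₀ + ENNReal.ofReal b • μ₁)
      = a * ∫ x, f x ∂μ₀ + b * ∫ x, f x ∂μ₁ := by
  rw [integral_add_measure (h₀.smul_measure ENNReal.ofReal_ne_top)
    (h₁.smul_measure ENNReal.ofReal_ne_top), integral_smul_measure, integral_smul_measure,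
    ENNReal.toReal_ofReal ha, ENNReal.toReal_ofReal hb, smul_eq_mul, smul_eq_mul]

lemma map_mix {β : Type*} [MeasurableSpace β] {f : α → β} (hf : Measurable f)
    (μ₀ μ₁ : Measure α) (a b : ℝ≥0∞) :
    (a • μ₀ + b • μ₁).map f = a • μ₀.map f + b • μ₁.map f := by
  rw [Measure.map_add _ _ hf, Measure.map_smul, Measure.map_smul]

end Mixture

section Convexity

variable {α : Type*} [MeasurableSpace α]

lemma mul_abs_min_log_zero_le_one {s : ℝ} (hs : 0 ≤ s) : s * |min (log s) 0| ≤ 1 := by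
  rcases le_or_gt 1 s with h1 | h1
  · simp [Real.log_nonneg h1]
  · rw [min_eq_left (Real.log_nonpos hs h1.le), abs_of_nonpos (Real.log_nonpos hs h1.le)]
    nlinarith [Real.self_sub_one_le_mul_log hs]

lemma integrable_min_llr_zero (γ ρ : Measure α) [SigmaFinite γ] [IsFiniteMeasure ρ] (h : γ ≪ ρ) :
    Integrable (fun x => min (llr γ ρ x) 0) γ := by
  have hmeas : Measurable fun x => min (llr γ ρ x) 0 := (measurable_llr γ ρ).min measurable_const
  refine ⟨hmeas.aestronglyMeasurable, ?_⟩
  rw [hasFiniteIntegral_iff_norm, ← lintegral_rnDeriv_mul h hmeas.norm.ennreal_ofReal.aemeasurable]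
  calc ∫⁻ x, γ.rnDeriv ρ x * ENNReal.ofReal ‖min (llr γ ρ x) 0‖ ∂ρ
      ≤ ∫⁻ _, 1 ∂ρ := by
        refine lintegral_mono_ae ?_
        filter_upwards [Measure.rnDeriv_lt_top γ ρ] with x hx
        rw [← ENNReal.ofReal_toReal hx.ne, ← ENNReal.ofReal_mul ENNReal.toReal_nonneg,
          ← ENNReal.ofReal_one]
        exact ENNReal.ofReal_le_ofReal (mul_abs_min_log_zero_le_one ENNReal.toReal_nonneg)
    _ < ∞ := by simp

lemma lintegral_div_rnDeriv_le {γ' ρ' : Measure α} [SigmaFinite γ'] [SigmaFinite ρ'] (h : γ' ≪ ρ')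
    {f : α → ℝ≥0∞} (hf : Measurable f) :
    ∫⁻ x, f x / γ'.rnDeriv ρ' x ∂γ' ≤ ∫⁻ x, f x ∂ρ' := by
  rw [← lintegral_rnDeriv_mul h (f := fun x => f x / γ'.rnDeriv ρ' x)
    (hf.div (Measure.measurable_rnDeriv γ' ρ')).aemeasurable]
  exact lintegral_mono fun x => ENNReal.mul_div_le

lemma lintegral_rnDeriv_mix {γ ρ ρ₀ ρ₁ : Measure α} [IsProbabilityMeasure γ] [SigmaFinite ρ]
    {a b : ℝ} (hρ : ρ = ENNReal.ofReal a • ρ₀ + ENNReal.ofReal b • ρ₁) (hγρ : γ ≪ ρ) :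
    ENNReal.ofReal a * ∫⁻ x, γ.rnDeriv ρ x ∂ρ₀ + ENNReal.ofReal b * ∫⁻ x, γ.rnDeriv ρ x ∂ρ₁
      = 1 := by
  rw [← smul_eq_mul, ← smul_eq_mul, ← lintegral_smul_measure, ← lintegral_smul_measure,
    ← lintegral_add_measure, ← hρ, Measure.lintegral_rnDeriv hγρ, measure_univ]

variable {γ ρ γ' ρ' : Measure α} [IsFiniteMeasure γ] [IsFiniteMeasure ρ] [IsProbabilityMeasure γ']
  [IsFiniteMeasure ρ']

lemma llr_le_llr_add_div_sub_one (h' : γ' ≪ ρ') (hγ : γ' ≪ γ) (hρ : ρ' ≪ ρ) (hγρ : γ ≪ ρ) :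
    ∀ᵐ x ∂γ', llr γ ρ x ≤ llr γ' ρ' x + ((γ.rnDeriv ρ x / γ'.rnDeriv ρ' x).toReal - 1) := by
  filter_upwards [Measure.rnDeriv_pos h', h'.ae_le (Measure.rnDeriv_lt_top γ' ρ'),
    hγ.ae_le (Measure.rnDeriv_pos hγρ), (h'.trans hρ).ae_le (Measure.rnDeriv_lt_top γ ρ)]
    with x h₀ h₀' h₁ h₁'
  have hx : 0 < (γ'.rnDeriv ρ' x).toReal := ENNReal.toReal_pos h₀.ne' h₀'.ne
  have hy : 0 < (γ.rnDeriv ρ x).toReal := ENNReal.toReal_pos h₁.ne' h₁'.ne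
  have := Real.log_le_sub_one_of_pos (div_pos hy hx)
  rw [Real.log_div hy.ne' hx.ne'] at this
  simp only [llr, ENNReal.toReal_div]
  linarith

/-- The log-sum inequality for a component `κ • γ' ≤ γ` of a mixture. -/
lemma integral_llr_le_integral_llr_add {κ : ℝ≥0∞} (hκ₀ : κ ≠ 0) (hκ : κ ≠ ∞) (hle : κ • γ' ≤ γ)
    (h' : γ' ≪ ρ') (hint' : Integrable (llr γ' ρ') γ') (hρ : ρ' ≪ ρ) (hγρ : γ ≪ ρ)
    (hA : ∫⁻ x, γ.rnDeriv ρ x ∂ρ' ≠ ∞) :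
    Integrable (llr γ ρ) γ' ∧
      ∫ x, llr γ ρ x ∂γ' ≤ ∫ x, llr γ' ρ' x ∂γ' + (∫⁻ x, γ.rnDeriv ρ x ∂ρ').toReal - 1 := by
  set r : α → ℝ≥0∞ := fun x => γ.rnDeriv ρ x / γ'.rnDeriv ρ' x
  have hr_meas : Measurable r :=
    (Measure.measurable_rnDeriv γ ρ).div (Measure.measurable_rnDeriv γ' ρ')
  have hr_le : ∫⁻ x, r x ∂γ' ≤ ∫⁻ x, γ.rnDeriv ρ x ∂ρ' :=
    lintegral_div_rnDeriv_le h' (Measure.measurable_rnDeriv γ ρ)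
  have hr_int : Integrable (fun x => (r x).toReal) γ' :=
    integrable_toReal_of_lintegral_ne_top hr_meas.aemeasurable (hr_le.trans_lt hA.lt_top).ne
  have hr_integral : ∫ x, (r x).toReal ∂γ' ≤ (∫⁻ x, γ.rnDeriv ρ x ∂ρ').toReal := by
    rw [integral_toReal hr_meas.aemeasurable (ae_lt_top' hr_meas.aemeasurable
      (hr_le.trans_lt hA.lt_top).ne)]
    exact ENNReal.toReal_mono hA hr_le
  have hbound := llr_le_llr_add_div_sub_one h'
    ((Measure.absolutelyContinuous_smul hκ₀).trans (Measure.absolutelyContinuous_of_le hle)) hρ hγρ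
  have hr_int' : Integrable (fun x => (r x).toReal - 1) γ' := hr_int.sub (integrable_const 1)
  have hsum : Integrable (fun x => llr γ' ρ' x + ((r x).toReal - 1)) γ' := hint'.add hr_int'
  have hmin : Integrable (fun x => min (llr γ ρ x) 0) γ' :=
    (integrable_smul_measure hκ₀ hκ).1 ((integrable_min_llr_zero γ ρ hγρ).mono_measure hle)
  have hint : Integrable (llr γ ρ) γ' :=
    integrable_of_le_of_le (measurable_llr γ ρ).aestronglyMeasurable
      (ae_of_all _ fun x => min_le_left _ _) hbound hmin hsum
  refine ⟨hint, ?_⟩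
  calc ∫ x, llr γ ρ x ∂γ' ≤ ∫ x, llr γ' ρ' x + ((r x).toReal - 1) ∂γ' :=
        integral_mono_ae hint hsum hbound
    _ = ∫ x, llr γ' ρ' x ∂γ' + (∫ x, (r x).toReal ∂γ' - 1) := by
        rw [integral_add hint' hr_int',
          integral_sub hr_int (integrable_const 1), integral_const, probReal_univ, one_smul]
    _ ≤ _ := by linarith

end Convexity

section JointConvexity

variable {α : Type*} [MeasurableSpace α] {γ₀ γ₁ ρ₀ ρ₁ : Measure α} [IsProbabilityMeasure γ₀]
  [IsProbabilityMeasure γ₁] [IsFiniteMeasure ρ₀] [IsFiniteMeasure ρ₁] {a b : ℝ}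

lemma integral_llr_mix_le (ha : 0 < a) (hb : 0 < b) (hab : a + b = 1)
    (h₀ : γ₀ ≪ ρ₀) (h₁ : γ₁ ≪ ρ₁) (hi₀ : Integrable (llr γ₀ ρ₀) γ₀)
    (hi₁ : Integrable (llr γ₁ ρ₁) γ₁) {γ ρ : Measure α}
    (hγ : γ = ENNReal.ofReal a • γ₀ + ENNReal.ofReal b • γ₁)
    (hρ : ρ = ENNReal.ofReal a • ρ₀ + ENNReal.ofReal b • ρ₁) :
    γ ≪ ρ ∧ Integrable (llr γ ρ) γ ∧
      ∫ x, llr γ ρ x ∂γ ≤ a * ∫ x, llr γ₀ ρ₀ x ∂γ₀ + b * ∫ x, llr γ₁ ρ₁ x ∂γ₁ := by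
  have ha₀ : ENNReal.ofReal a ≠ 0 := (ENNReal.ofReal_pos.2 ha).ne'
  have hb₀ : ENNReal.ofReal b ≠ 0 := (ENNReal.ofReal_pos.2 hb).ne'
  have : IsFiniteMeasure (ENNReal.ofReal a • ρ₀) := ρ₀.smul_finite ENNReal.ofReal_ne_top
  have : IsFiniteMeasure (ENNReal.ofReal b • ρ₁) := ρ₁.smul_finite ENNReal.ofReal_ne_top
  have : IsProbabilityMeasure γ := hγ ▸ isProbabilityMeasure_mix ha.le hb.le hab
  have : IsFiniteMeasure ρ := hρ ▸ inferInstance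
  have hρ₀ : ρ₀ ≪ ρ := hρ ▸ (Measure.absolutelyContinuous_smul ha₀).add_right _
  have hρ₁ : ρ₁ ≪ ρ := hρ ▸ (Measure.absolutelyContinuous_smul hb₀).add_right' _
  have hγρ : γ ≪ ρ := by
    rw [hγ, Measure.AbsolutelyContinuous.add_left_iff]
    exact ⟨(h₀.trans hρ₀).smul_left _, (h₁.trans hρ₁).smul_left _⟩
  have hA := lintegral_rnDeriv_mix hρ hγρ
  set A₀ := ∫⁻ x, γ.rnDeriv ρ x ∂ρ₀
  set A₁ := ∫⁻ x, γ.rnDeriv ρ x ∂ρ₁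
  have hA₀ : A₀ ≠ ∞ := fun h => by simp [h, ENNReal.mul_top ha₀] at hA
  have hA₁ : A₁ ≠ ∞ := fun h => by simp [h, ENNReal.mul_top hb₀] at hA
  have hA' : a * A₀.toReal + b * A₁.toReal = 1 := by
    have := congrArg ENNReal.toReal hA
    rwa [ENNReal.toReal_add (ENNReal.mul_ne_top ENNReal.ofReal_ne_top hA₀)
      (ENNReal.mul_ne_top ENNReal.ofReal_ne_top hA₁), ENNReal.toReal_mul, ENNReal.toReal_mul,
      ENNReal.toReal_ofReal ha.le, ENNReal.toReal_ofReal hb.le, ENNReal.toReal_one] at this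
  obtain ⟨hint₀, hle₀⟩ := integral_llr_le_integral_llr_add ha₀ ENNReal.ofReal_ne_top
    (hγ ▸ Measure.le_add_right le_rfl) h₀ hi₀ hρ₀ hγρ hA₀
  obtain ⟨hint₁, hle₁⟩ := integral_llr_le_integral_llr_add hb₀ ENNReal.ofReal_ne_top
    (hγ ▸ Measure.le_add_left le_rfl) h₁ hi₁ hρ₁ hγρ hA₁
  refine ⟨hγρ, hγ ▸ (hint₀.smul_measure ENNReal.ofReal_ne_top).add_measure
    (hint₁.smul_measure ENNReal.ofReal_ne_top), ?_⟩
  have hsplit := integral_mix hint₀ hint₁ ha.le hb.le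
  rw [← hγ] at hsplit
  rw [hsplit]
  nlinarith [mul_le_mul_of_nonneg_left hle₀ ha.le, mul_le_mul_of_nonneg_left hle₁ hb.le]

theorem relEnt_mix_le (ha : 0 < a) (hb : 0 < b) (hab : a + b = 1) :
    relEnt (ENNReal.ofReal a • γ₀ + ENNReal.ofReal b • γ₁)
        (ENNReal.ofReal a • ρ₀ + ENNReal.ofReal b • ρ₁)
      ≤ (a : EReal) * relEnt γ₀ ρ₀ + (b : EReal) * relEnt γ₁ ρ₁ := by
  by_cases h₀ : γ₀ ≪ ρ₀ ∧ Integrable (llr γ₀ ρ₀) γ₀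
  swap
  · rw [relEnt_eq_top h₀, EReal.coe_mul_top_of_pos ha,
      EReal.top_add_of_ne_bot (EReal.coe_mul_ne_bot hb.le (relEnt_ne_bot _ _))]
    exact le_top
  by_cases h₁ : γ₁ ≪ ρ₁ ∧ Integrable (llr γ₁ ρ₁) γ₁
  swap
  · rw [relEnt_eq_top h₁, EReal.coe_mul_top_of_pos hb,
      EReal.add_top_of_ne_bot (EReal.coe_mul_ne_bot ha.le (relEnt_ne_bot _ _))]
    exact le_top
  obtain ⟨hac, hint, hle⟩ := integral_llr_mix_le ha hb hab h₀.1 h₁.1 h₀.2 h₁.2 rfl rfl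
  rw [relEnt_of_ac_of_integrable hac hint, relEnt_of_ac_of_integrable h₀.1 h₀.2,
    relEnt_of_ac_of_integrable h₁.1 h₁.2]
  exact_mod_cast hle

theorem integral_add_relEnt_mix_le {f : α → ℝ} (hf₀ : Integrable f γ₀) (hf₁ : Integrable f γ₁)
    {τ : ℝ} (hτ : 0 ≤ τ) (ha : 0 < a) (hb : 0 < b) (hab : a + b = 1) :
    ((∫ x, f x ∂(ENNReal.ofReal a • γ₀ + ENNReal.ofReal b • γ₁) : ℝ) : EReal)
        + τ * relEnt (ENNReal.ofReal a • γ₀ + ENNReal.ofReal b • γ₁)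
          (ENNReal.ofReal a • ρ₀ + ENNReal.ofReal b • ρ₁)
      ≤ a * (((∫ x, f x ∂γ₀ : ℝ) : EReal) + τ * relEnt γ₀ ρ₀)
        + b * (((∫ x, f x ∂γ₁ : ℝ) : EReal) + τ * relEnt γ₁ ρ₁) := by
  calc _ ≤ ((a * ∫ x, f x ∂γ₀ + b * ∫ x, f x ∂γ₁ : ℝ) : EReal)
        + τ * (a * relEnt γ₀ ρ₀ + b * relEnt γ₁ ρ₁) := by
        rw [integral_mix hf₀ hf₁ ha.le hb.le]
        gcongr
        exact relEnt_mix_le ha hb hab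
    _ = _ := by
        rw [EReal.left_distrib_of_nonneg_of_ne_top (EReal.coe_nonneg.2 hτ) (EReal.coe_ne_top τ),
          EReal.left_distrib_of_nonneg_of_ne_top (EReal.coe_nonneg.2 ha.le) (EReal.coe_ne_top a),
          EReal.left_distrib_of_nonneg_of_ne_top (EReal.coe_nonneg.2 hb.le) (EReal.coe_ne_top b),
          mul_left_comm (τ : EReal) a, mul_left_comm (τ : EReal) b]
        push_cast
        exact add_add_add_comm _ _ _ _

end JointConvexity

section Transport

variable {α : Type*} [MeasurableSpace α]

lemma isProbabilityMeasure_of_map_fst {β : Type*} [MeasurableSpace β] {γ : Measure (α × β)}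
    {μ : Measure α} [IsProbabilityMeasure μ] (h : γ.map Prod.fst = μ) : IsProbabilityMeasure γ :=
  have : IsProbabilityMeasure (γ.map Prod.fst) := h ▸ ‹_›
  Measure.isProbabilityMeasure_of_map Prod.fst

lemma ae_mem_prod_of_map {β : Type*} [MeasurableSpace β] {γ : Measure (α × β)} {μ : Measure α}
    {ν : Measure β} {s : Set α} {t : Set β} (hfst : γ.map Prod.fst = μ)
    (hsnd : γ.map Prod.snd = ν) (hμ : μ sᶜ = 0) (hν : ν tᶜ = 0) : ∀ᵐ p ∂γ, p ∈ s ×ˢ t := by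
  have h₁ := ae_of_ae_map measurable_fst.aemeasurable (hfst ▸ measure_eq_zero_iff_ae_notMem.1 hμ)
  have h₂ := ae_of_ae_map measurable_snd.aemeasurable (hsnd ▸ measure_eq_zero_iff_ae_notMem.1 hν)
  filter_upwards [h₁, h₂] with p hp₁ hp₂
  simpa using And.intro hp₁ hp₂

variable {c : α × α → ℝ} {τ : ℝ} {μ ν : Measure α} [IsProbabilityMeasure μ]
  [IsProbabilityMeasure ν]

lemma EOT_ne_bot {s : Set α} {M : ℝ} (hM : ∀ p ∈ s ×ˢ s, ‖c p‖ ≤ M) (hτ : 0 ≤ τ)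
    (hμ : μ sᶜ = 0) (hν : ν sᶜ = 0) : EOT c τ μ ν ≠ ⊥ := by
  refine ne_bot_of_le_ne_bot (EReal.coe_ne_bot (-M)) (le_iInf fun ⟨γ, hfst, hsnd⟩ => ?_)
  have := isProbabilityMeasure_of_map_fst hfst
  have hcost : -M ≤ ∫ q, c q ∂γ := by
    have := norm_integral_le_of_norm_le_const
      ((ae_mem_prod_of_map hfst hsnd hμ hν).mono fun p hp => hM p hp)
    rw [probReal_univ, mul_one] at this
    exact neg_le_of_abs_le this
  calc ((-M : ℝ) : EReal) = ((-M : ℝ) : EReal) + 0 := (add_zero _).symm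
    _ ≤ _ := add_le_add (EReal.coe_le_coe_iff.2 hcost)
        (mul_nonneg (EReal.coe_nonneg.2 hτ) (relEnt_nonneg _ _))

variable [StandardBorelSpace α] [Nonempty α] {lam : Measure α} [IsFiniteMeasure lam]

lemma integral_add_relEnt_add_relEnt {γ : Measure (α × α)} (hτ : 0 ≤ τ)
    (hfst : γ.map Prod.fst = μ) :
    ((∫ q, c q ∂γ : ℝ) : EReal) + τ * relEnt γ (μ.prod ν) + τ * relEnt μ lam
      = ((∫ q, c q ∂γ : ℝ) : EReal) + τ * relEnt γ (lam.prod ν) := by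
  have := isProbabilityMeasure_of_map_fst hfst
  rw [relEnt_prod_eq_add hfst lam ν, add_assoc,
    EReal.left_distrib_of_nonneg_of_ne_top (EReal.coe_nonneg.2 hτ) (EReal.coe_ne_top τ)]

lemma EOT_add_relEnt_le {γ : Measure (α × α)} (hτ : 0 ≤ τ) (hfst : γ.map Prod.fst = μ)
    (hsnd : γ.map Prod.snd = ν) :
    EOT c τ μ ν + τ * relEnt μ lam ≤ ((∫ q, c q ∂γ : ℝ) : EReal) + τ * relEnt γ (lam.prod ν) := by
  rw [← integral_add_relEnt_add_relEnt hτ hfst]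
  gcongr
  exact iInf_le_of_le ⟨γ, hfst, hsnd⟩ le_rfl

lemma iInf_integral_add_relEnt_eq (hτ : 0 ≤ τ) (hbot : EOT c τ μ ν ≠ ⊥) :
    ⨅ γ : {γ : Measure (α × α) // γ.map Prod.fst = μ ∧ γ.map Prod.snd = ν},
        ((∫ q, c q ∂(γ : Measure (α × α)) : ℝ) : EReal)
          + τ * relEnt (γ : Measure (α × α)) (lam.prod ν)
      = EOT c τ μ ν + τ * relEnt μ lam := by
  rw [EOT, ← EReal.iInf_add_of_ne_bot _ hbot (EReal.coe_mul_ne_bot hτ (relEnt_ne_bot _ _))]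
  exact iInf_congr fun γ => (integral_add_relEnt_add_relEnt hτ γ.2.1).symm

lemma iInf_integral_add_relEnt_ne_bot (hτ : 0 ≤ τ) (hbot : EOT c τ μ ν ≠ ⊥) :
    ⨅ γ : {γ : Measure (α × α) // γ.map Prod.fst = μ ∧ γ.map Prod.snd = ν},
        ((∫ q, c q ∂(γ : Measure (α × α)) : ℝ) : EReal)
          + τ * relEnt (γ : Measure (α × α)) (lam.prod ν) ≠ ⊥ := by
  rw [iInf_integral_add_relEnt_eq hτ hbot]
  exact EReal.add_ne_bot_iff.2 ⟨hbot, EReal.coe_mul_ne_bot hτ (relEnt_ne_bot _ _)⟩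

end Transport

theorem stmt_7_general {d : ℕ} (X : Set (Pt d)) (hXc : IsCompact X)
    (c : Pt d × Pt d → ℝ) (hc : Continuous c) (τ : ℝ) (hτ : 0 < τ)
    (μ₀ ν₀ μ₁ ν₁ : Measure (Pt d))
    [IsProbabilityMeasure μ₀] [IsProbabilityMeasure ν₀]
    [IsProbabilityMeasure μ₁] [IsProbabilityMeasure ν₁]
    (hμ₀X : μ₀ Xᶜ = 0) (hν₀X : ν₀ Xᶜ = 0) (hμ₁X : μ₁ Xᶜ = 0) (hν₁X : ν₁ Xᶜ = 0)
    (t : ℝ) (ht : t ∈ Icc (0 : ℝ) 1)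
    (μt νt : Measure (Pt d))
    (hμt : μt = ENNReal.ofReal (1 - t) • μ₀ + ENNReal.ofReal t • μ₁)
    (hνt : νt = ENNReal.ofReal (1 - t) • ν₀ + ENNReal.ofReal t • ν₁) :
    EOT c τ μt νt + (τ : EReal) * relEnt μt (volume.restrict X)
      ≤ ((1 - t : ℝ) : EReal) * (EOT c τ μ₀ ν₀ + (τ : EReal) * relEnt μ₀ (volume.restrict X))
        + (t : EReal) * (EOT c τ μ₁ ν₁ + (τ : EReal) * relEnt μ₁ (volume.restrict X)) := by
  have : IsFiniteMeasure (volume.restrict X) := isFiniteMeasure_restrict.2 hXc.measure_lt_top.ne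
  rcases ht.1.eq_or_lt with rfl | ht₀
  · simp [hμt, hνt]
  rcases ht.2.eq_or_lt with rfl | ht₁
  · simp [hμt, hνt]
  obtain ⟨M, hM⟩ := (hXc.prod hXc).exists_bound_of_continuousOn hc.continuousOn
  have hG₀ := EOT_ne_bot hM hτ.le hμ₀X hν₀X
  have hG₁ := EOT_ne_bot hM hτ.le hμ₁X hν₁X
  rw [← iInf_integral_add_relEnt_eq hτ.le hG₀, ← iInf_integral_add_relEnt_eq hτ.le hG₁]
  refine EReal.le_mul_iInf_add_mul_iInf (sub_pos.2 ht₁) ht₀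
    (iInf_integral_add_relEnt_ne_bot hτ.le hG₀) (iInf_integral_add_relEnt_ne_bot hτ.le hG₁)
    fun ⟨γ₀, h₀fst, h₀snd⟩ ⟨γ₁, h₁fst, h₁snd⟩ => ?_
  have := isProbabilityMeasure_of_map_fst h₀fst
  have := isProbabilityMeasure_of_map_fst h₁fst
  have : IsProbabilityMeasure μt := hμt ▸ isProbabilityMeasure_mix (by linarith) ht₀.le (by ring)
  have : IsProbabilityMeasure νt := hνt ▸ isProbabilityMeasure_mix (by linarith) ht₀.le (by ring)
  have hcost {γ μ ν} (hfst : γ.map Prod.fst = μ) (hsnd : γ.map Prod.snd = ν) (hμ : μ Xᶜ = 0)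
      (hν : ν Xᶜ = 0) [IsFiniteMeasure γ] : Integrable c γ :=
    .of_bound hc.aestronglyMeasurable M
      ((ae_mem_prod_of_map hfst hsnd hμ hν).mono fun p hp => hM p hp)
  calc _ ≤ _ := EOT_add_relEnt_le hτ.le (γ := ENNReal.ofReal (1 - t) • γ₀ + ENNReal.ofReal t • γ₁)
        (by rw [map_mix measurable_fst, h₀fst, h₁fst, hμt])
        (by rw [map_mix measurable_snd, h₀snd, h₁snd, hνt])
    _ ≤ _ := by
        rw [hνt, Measure.prod_add, Measure.prod_smul_right, Measure.prod_smul_right]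
        exact integral_add_relEnt_mix_le (hcost h₀fst h₀snd hμ₀X hν₀X)
          (hcost h₁fst h₁snd hμ₁X hν₁X) hτ.le (sub_pos.2 ht₁) ht₀ (by ring)

/-- the map `(μ,ν) ↦ T_τ(μ,ν) + τ H(μ|λ_X)` is jointly convex on
`P(X) × P(X)`, where `λ_X` is Lebesgue measure restricted to `X`. -/
theorem stmt_7 {d : ℕ} (X : Set (Pt d)) (hXc : IsCompact X) (hXne : X.Nonempty)
    (hXpos : 0 < volume X)
    (c : Pt d × Pt d → ℝ) (hc : Continuous c) (τ : ℝ) (hτ : 0 < τ)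
    (μ₀ ν₀ μ₁ ν₁ : Measure (Pt d))
    [IsProbabilityMeasure μ₀] [IsProbabilityMeasure ν₀]
    [IsProbabilityMeasure μ₁] [IsProbabilityMeasure ν₁]
    (hμ₀X : μ₀ Xᶜ = 0) (hν₀X : ν₀ Xᶜ = 0) (hμ₁X : μ₁ Xᶜ = 0) (hν₁X : ν₁ Xᶜ = 0)
    (t : ℝ) (ht : t ∈ Icc (0 : ℝ) 1)
    (μt νt : Measure (Pt d))
    (hμt : μt = ENNReal.ofReal (1 - t) • μ₀ + ENNReal.ofReal t • μ₁)
    (hνt : νt = ENNReal.ofReal (1 - t) • ν₀ + ENNReal.ofReal t • ν₁) :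
    EOT c τ μt νt + (τ : EReal) * relEnt μt (volume.restrict X)
      ≤ ((1 - t : ℝ) : EReal) * (EOT c τ μ₀ ν₀ + (τ : EReal) * relEnt μ₀ (volume.restrict X))
        + (t : EReal) * (EOT c τ μ₁ ν₁ + (τ : EReal) * relEnt μ₁ (volume.restrict X)) :=
  stmt_7_general X hXc c hc τ hτ μ₀ ν₀ μ₁ ν₁ hμ₀X hν₀X hμ₁X hν₁X t ht μt νt hμt hνt
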